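/- Let X : ℝ → Matrix (Fin N) (Fin N) ℂ be the fundamental solution of the linear ODE X'(t) = A(t) X(t), X(0) = 1, where A is continuous and T-periodic (T > 0). Then X(t + T) = X(t) * X(T) for all t ∈ ℝ. -/

import Mathlib

/-!
Both `s ↦ X (s + T)` (by periodicity of `A`) and `s ↦ X s * X T` (by right multiplication by a
constant) solve `Y' = A Y` with `Y 0 = X T`. A linear ODE with continuous coefficients has
locally Lipschitz right-hand side, so its solutions are determined by their initial value.
-/

open Set

open scoped Matrix

theorem ODE_linear_solution_unique {E : Type*} [NormedAddCommGroup E] [NormedSpace ℝ E]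
    {a : ℝ → E →L[ℝ] E} (ha : Continuous a) {f g : ℝ → E} {t₀ : ℝ}
    (hf : ∀ t, HasDerivAt f (a t (f t)) t) (hg : ∀ t, HasDerivAt g (a t (g t)) t)
    (heq : f t₀ = g t₀) : f = g := by
  ext t
  obtain ⟨l, r, ht, ht₀⟩ : ∃ l r, t ∈ Ioo l r ∧ t₀ ∈ Ioo l r := by
    use min t t₀ - 1, max t t₀ + 1
    grind
  obtain ⟨τ, -, hτ⟩ := isCompact_Icc.exists_isMaxOn (nonempty_Icc.2 (ht.1.trans ht.2).le)
    (continuous_nnnorm.comp ha).continuousOn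
  have hlip : ∀ s ∈ Ioo l r, LipschitzOnWith ‖a τ‖₊ (a s) univ := fun s hs =>
    ((a s).lipschitz.weaken (hτ (Ioo_subset_Icc_self hs))).lipschitzOnWith
  exact ODE_solution_unique_of_mem_Ioo hlip ht₀ (fun s _ => ⟨hf s, mem_univ _⟩)
    (fun s _ => ⟨hg s, mem_univ _⟩) heq ht

-- The entrywise sup norm, so that a matrix-valued derivative is the matrix of entry derivatives.
open scoped Matrix.Norms.Elementwise

namespace Matrix

variable {𝕜 m n p : Type*} [RCLike 𝕜]

theorem hasDerivAt_iff_apply [Fintype n] {X : ℝ → Matrix m n 𝕜} {X' : Matrix m n 𝕜} {t : ℝ} :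
    HasDerivAt X X' t ↔ ∀ i j, HasDerivAt (fun s => X s i j) (X' i j) t :=
  hasDerivAt_pi.trans (forall_congr' fun _ => hasDerivAt_pi)

theorem _root_.HasDerivAt.matrix_mul_const [Fintype m] [Fintype n] [Fintype p]
    {X : ℝ → Matrix m n 𝕜} {X' : Matrix m n 𝕜} {t : ℝ}
    (hX : HasDerivAt X X' t) (C : Matrix n p 𝕜) :
    HasDerivAt (fun s => X s * C) (X' * C) t :=
  (mulRightLinearMap m ℝ C).toContinuousLinearMap.hasFDerivAt.comp_hasDerivAt t hX

theorem ODE_linear_solution_unique [Fintype m] [Fintype n] {A : ℝ → Matrix m m 𝕜}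
    (hA : Continuous A) {X Y : ℝ → Matrix m n 𝕜} {t₀ : ℝ} (hX : ∀ t, HasDerivAt X (A t * X t) t)
    (hY : ∀ t, HasDerivAt Y (A t * Y t) t) (heq : X t₀ = Y t₀) : X = Y :=
  let mulLeftCLM : Matrix m m 𝕜 →ₗ[ℝ] Matrix m n 𝕜 →L[ℝ] Matrix m n 𝕜 :=
    LinearMap.toContinuousLinearMap.toLinearMap ∘ₗ mulLinearMap ℝ
  _root_.ODE_linear_solution_unique (mulLeftCLM.continuous_of_finiteDimensional.comp hA) hX hY heq

end Matrix

theorem floquet_cocycle_general (N : ℕ) (T : ℝ)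
    (A X : ℝ → Matrix (Fin N) (Fin N) ℂ)
    (hA_cont : ∀ i j, Continuous fun t => A t i j)
    (hA_per : ∀ t, A (t + T) = A t)
    (hX0 : X 0 = 1)
    (hX_ode : ∀ t i j, HasDerivAt (fun s => X s i j) ((A t * X t) i j) t) :
    ∀ t : ℝ, X (t + T) = X t * X T := by
  have hA : Continuous A := continuous_pi fun i => continuous_pi (hA_cont i)
  have hX : ∀ t, HasDerivAt X (A t * X t) t := fun t => Matrix.hasDerivAt_iff_apply.2 (hX_ode t)
  have hshift : ∀ s, HasDerivAt (fun s => X (s + T)) (A s * X (s + T)) s := fun s => by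
    have h := (hX (s + T)).comp_add_const s T
    rwa [hA_per] at h
  have hmul : ∀ s, HasDerivAt (fun s => X s * X T) (A s * (X s * X T)) s := fun s => by
    have h := (hX s).matrix_mul_const (X T)
    rwa [Matrix.mul_assoc] at h
  have hinit : X (0 + T) = X 0 * X T := by rw [zero_add, hX0, Matrix.one_mul]
  exact congrFun (Matrix.ODE_linear_solution_unique hA hshift hmul hinit)

/-- If `X` is the fundamental solution of the `T`-periodic linear system
`X' = A(t) X`, `X 0 = 1` (with `A` continuous and `T`-periodic), then
`X (t + T) = X t * X T` for all `t`. -/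
theorem floquet_cocycle (N : ℕ) (T : ℝ) (hT : 0 < T)
    (A X : ℝ → Matrix (Fin N) (Fin N) ℂ)
    (hA_cont : ∀ i j, Continuous fun t => A t i j)
    (hA_per : ∀ t, A (t + T) = A t)
    (hX0 : X 0 = 1)
    (hX_ode : ∀ t i j, HasDerivAt (fun s => X s i j) ((A t * X t) i j) t) :
    ∀ t : ℝ, X (t + T) = X t * X T :=
  floquet_cocycle_general N T A X hA_cont hA_per hX0 hX_ode
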